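/- arXiv:2501.13600 — 2 statements merged into one kernel-verified Lean document; each statement's English description precedes it below -/
import Mathlib

section
/- Let D be a dualisable system on a set with walls (S,W) and let A ⊆ S_D be a gated subset. Then for any halfspace h⁻ of any wall in W, the image g_A(h⁻) of h⁻ under the gate map of A is itself a gated subset of S_D. -/
/-!
Common definitions: coarse geometry (hyperbolicity, rough geodesics, stable cylinders,
quasi-isometries, quasitrees, coarse medians), word metrics, spaces with walls,
dualisable systems and their dual spaces, walls of quasitrees coming from balls,
and the induced wall structures on images of spaces in products of quasitrees.
-/

open Set Metric

namespace GSC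

universe u v w

variable {X Y : Type*}

/-- The Gromov product `⟨y,z⟩_w` with respect to the distance function `d`. -/
noncomputable def gp (d : X → X → ℝ) (w y z : X) : ℝ := (d w y + d w z - d y z) / 2

/-- `d` satisfies the four-point `δ`-hyperbolicity condition. -/
def IsHyp (d : X → X → ℝ) (δ : ℝ) : Prop :=
  ∀ w x y z : X, min (gp d w x y) (gp d w y z) - δ ≤ gp d w x z

/-- `γ`, restricted to `[a,b]`, is a `k`-rough geodesic from `x` to `y`:
a `(1,k)`-quasi-isometric embedding of an interval joining `x` to `y`. -/
def IsRG (d : X → X → ℝ) (k : ℝ) (x y : X) (γ : ℝ → X) (a b : ℝ) : Prop :=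
  a ≤ b ∧ γ a = x ∧ γ b = y ∧
    ∀ s ∈ Icc a b, ∀ t ∈ Icc a b, abs (d (γ s) (γ t) - |s - t|) ≤ k

/-- `X` is `k`-roughly geodesic: any two points are joined by a `k`-rough geodesic. -/
def RGSpace (d : X → X → ℝ) (k : ℝ) : Prop :=
  ∀ x y : X, ∃ γ a b, IsRG d k x y γ a b

/-- The (closed) ball of radius `r` about `x` for the distance function `d`. -/
def rball (d : X → X → ℝ) (x : X) (r : ℝ) : Set X := {p | d x p ≤ r}

/-- `C` is a choice of `θ`-cylinders (with respect to `δ`-rough geodesics): for all `x,y`,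
every `δ`-rough geodesic from `x` to `y` is contained in `C x y`, and `C x y` is contained
in the `θ`-neighbourhood of every `δ`-rough geodesic from `x` to `y`. -/
def IsCylinders (d : X → X → ℝ) (δ θ : ℝ) (C : X → X → Set X) : Prop :=
  ∀ x y γ a b, IsRG d δ x y γ a b →
    γ '' Icc a b ⊆ C x y ∧ ∀ p ∈ C x y, ∃ q ∈ γ '' Icc a b, d p q ≤ θ

/-- The choice of cylinders `C` is globally `(k,R)`-stable: it is reversible, and for any
`x,y,z` the cylinders `C x y` and `C x z` agree inside the ball of radius `⟨y,z⟩ₓ` about `x`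
after removing `k` balls of radius `R`. -/
def IsStable (d : X → X → ℝ) (k : ℕ) (R : ℝ) (C : X → X → Set X) : Prop :=
  (∀ x y, C x y = C y x) ∧
    ∀ x y z : X, ∃ B : Fin k → X,
      (C x y ∩ rball d x (gp d x y z)) \ (⋃ i, rball d (B i) R) =
      (C x z ∩ rball d x (gp d x y z)) \ (⋃ i, rball d (B i) R)

/-- `μ` is a coarse median (coarse centre of triangles) for the hyperbolic distance `d`:
the distance of `μ x y z` to each vertex agrees with the corresponding Gromov product up
to the additive error `c`. -/
def IsCoarseMedian (d : X → X → ℝ) (μ : X → X → X → X) (c : ℝ) : Prop :=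
  ∀ x y z : X,
    |d x (μ x y z) - gp d x y z| ≤ c ∧
    |d y (μ x y z) - gp d y x z| ≤ c ∧
    |d z (μ x y z) - gp d z x y| ≤ c

/-- `f` is a `lam`-quasi-isometric embedding from `(X,dX)` to `(Y,dY)`. -/
def IsQIE (dX : X → X → ℝ) (dY : Y → Y → ℝ) (f : X → Y) (lam : ℝ) : Prop :=
  ∀ x x' : X, dX x x' / lam - lam ≤ dY (f x) (f x') ∧ dY (f x) (f x') ≤ lam * dX x x' + lam

/-- `f` is a `lam`-quasi-isometry from `(X,dX)` to `(Y,dY)`. -/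
def IsQI (dX : X → X → ℝ) (dY : Y → Y → ℝ) (f : X → Y) (lam : ℝ) : Prop :=
  IsQIE dX dY f lam ∧ ∀ y : Y, ∃ x : X, dY (f x) y ≤ lam

/-- `(T,d)` is a quasitree (with constant `lam`): it is roughly geodesic and
quasi-isometric to a simplicial tree. -/
def IsQuasitree {T : Type u} (d : T → T → ℝ) (lam : ℝ) : Prop :=
  RGSpace d lam ∧
    ∃ (V : Type u) (Γ : SimpleGraph V), Γ.IsTree ∧
      ∃ f : T → V, IsQIE d (fun a b => (Γ.dist a b : ℝ)) f lam ∧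
        ∀ v : V, ∃ t : T, (Γ.dist v (f t) : ℝ) ≤ lam

/-- The `ℓ¹` distance on a finite product. -/
noncomputable def l1distF {m : ℕ} {T : Fin m → Type*} (dT : ∀ i, T i → T i → ℝ)
    (p q : ∀ i, T i) : ℝ := ∑ i, dT i (p i) (q i)

/-- The word metric on a group `G` with respect to a generating set `A`
(the distance function of the Cayley graph of `(G,A)`). -/
noncomputable def wordDist {G : Type*} [Group G] (A : Set G) (g h : G) : ℝ :=
  (sInf {n : ℕ | ∃ l : List G, l.length = n ∧ (∀ a ∈ l, a ∈ A ∨ a⁻¹ ∈ A) ∧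
    l.prod = g⁻¹ * h} : ℕ)

/-- `(X, dX, μX)`, with the `G`-action `ρ`, admits a `G`-equivariant quasimedian
quasi-isometric embedding into a product of `m` quasitrees (with the `ℓ¹` metric and
coordinatewise coarse median); i.e. the strong quasitree rank of `(X,G)` is at most `m`. -/
def HasStrongQT {G : Type*} [Group G] {X : Type u} (ρ : G →* Equiv.Perm X)
    (dX : X → X → ℝ) (μX : X → X → X → X) (m : ℕ) : Prop :=
  ∃ (T : Fin m → Type u) (dT : ∀ i, T i → T i → ℝ) (μT : ∀ i, T i → T i → T i → T i)
    (f : X → ∀ i, T i) (α : G →* Equiv.Perm (∀ i, T i)) (lam c : ℝ),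
      (∀ i, IsQuasitree (dT i) lam) ∧
      (∀ i, IsCoarseMedian (dT i) (μT i) c) ∧
      IsQIE dX (l1distF dT) f lam ∧
      (∀ x y z : X, l1distF dT (fun i => μT i (f x i) (f y i) (f z i)) (f (μX x y z)) ≤ c) ∧
      (∀ (g : G) p q, l1distF dT (α g p) (α g q) = l1distF dT p q) ∧
      (∀ (g : G) x, f (ρ g x) = α g (f x))

/-! ### Sets with walls, ultrafilters and dualisable systems

A wall on a set `X` is a bipartition into two halfspaces.  We model a collection of
walls as a collection `H` of halfspaces (subsets of `X`) that is closed under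
complementation; the wall corresponding to a halfspace `h` is the bipartition `{h, hᶜ}`. -/

/-- `H` is a collection of halfspaces closed under complementation (a set of walls). -/
def WallClosed (H : Set (Set X)) : Prop := ∀ h ∈ H, hᶜ ∈ H

/-- `x` is an ultrafilter on the walls `H`: a consistent choice of one halfspace of every
wall of `H`. -/
def IsUF (H : Set (Set X)) (x : Set (Set X)) : Prop :=
  x ⊆ H ∧ (∀ h ∈ H, (h ∈ x ↔ hᶜ ∉ x)) ∧ ∀ h ∈ x, ∀ k ∈ H, h ⊆ k → k ∈ x

/-- The principal ultrafilter of a point `s`: the halfspaces containing `s`. -/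
def pUF (H : Set (Set X)) (s : X) : Set (Set X) := {h ∈ H | s ∈ h}

/-- The set `c` of walls separates the ultrafilters `x` and `y`: they orient every
wall of `c` oppositely. -/
def Seps (x y c : Set (Set X)) : Prop := ∀ h ∈ c, (h ∈ x ↔ h ∉ y)

/-- `d_D(x,y) = sup { |c| : c ∈ D separates x from y }`. -/
noncomputable def dD (D : Set (Set (Set X))) (x y : Set (Set X)) : ℕ∞ :=
  ⨆ (c : Set (Set X)) (_ : c ∈ D ∧ Seps x y c), c.encard

/-- The real-valued version of `dD` (equal to it whenever `dD` is finite). -/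
noncomputable def dDr (D : Set (Set (Set X))) (x y : Set (Set X)) : ℝ :=
  ((dD D x y).toNat : ℝ)

/-- `D` is a dualisable system on the set with walls `(X,H)`. -/
def IsDualisable (H : Set (Set X)) (D : Set (Set (Set X))) : Prop :=
  (∀ c ∈ D, c ⊆ H) ∧ (∀ h ∈ H, ({h} : Set (Set X)) ∈ D) ∧
    (∀ c ∈ D, ∀ c' ⊆ c, c' ∈ D) ∧
    ∀ s t : X, dD D (pUF H s) (pUF H t) < ⊤

/-- The dual space `X_D`: all ultrafilters at finite `d_D`-distance from the principal
ultrafilters of points of `X`. -/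
def dualSpace (H : Set (Set X)) (D : Set (Set (Set X))) : Set (Set (Set X)) :=
  {x | IsUF H x ∧ ∀ s : X, dD D x (pUF H s) < ⊤}

/-- `c` is a chain of walls: the walls of `c` can be oriented so that the chosen
halfspaces are totally ordered by strict inclusion (equivalently, each wall separates
its neighbours). -/
def IsChain' (c : Set (Set X)) : Prop :=
  ∃ σ : Set X → Set X, (∀ h ∈ c, σ h = h ∨ σ h = hᶜ) ∧
    ∀ h ∈ c, ∀ k ∈ c, h ≠ k → σ h ⊂ σ k ∨ σ k ⊂ σ h

/-- The walls of `h` and `k` cross: all four quarterspaces are nonempty. -/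
def Crosses (h k : Set X) : Prop :=
  (h ∩ k).Nonempty ∧ (h ∩ kᶜ).Nonempty ∧ (hᶜ ∩ k).Nonempty ∧ (hᶜ ∩ kᶜ).Nonempty

/-- `c₁ ∪ c₂` is a chain in which all of `c₁` precedes all of `c₂`
(i.e. `c₁ ⊆ c₂⁻`). -/
def ChainPrec (c₁ c₂ : Set (Set X)) : Prop :=
  ∃ σ : Set X → Set X, (∀ h ∈ c₁ ∪ c₂, σ h = h ∨ σ h = hᶜ) ∧
    (∀ h ∈ c₁ ∪ c₂, ∀ k ∈ c₁ ∪ c₂, h ≠ k → σ h ⊂ σ k ∨ σ k ⊂ σ h) ∧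
    ∀ h ∈ c₁, ∀ k ∈ c₂, σ h ⊆ σ k

/-- `D` is `m`-gluable. -/
def Gluable (D : Set (Set (Set X))) (m : ℕ) : Prop :=
  ∀ c₁ ∈ D, ∀ c₂ ∈ D, ChainPrec c₁ c₂ →
    ∃ e ⊆ c₁ ∪ c₂, e.encard ≤ (m : ℕ∞) ∧ (c₁ ∪ c₂) \ e ∈ D

/-- `D` is `L`-separated. -/
def Separated (D : Set (Set (Set X))) (L : ℕ) : Prop :=
  ∀ h₁ h₂ : Set X, ({h₁, h₂} : Set (Set X)) ∈ D → h₁ ≠ h₂ →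
    ∀ c ∈ D, (∀ k ∈ c, Crosses k h₁ ∧ Crosses k h₂) → c.encard ≤ (L : ℕ∞)

/-- The median of three ultrafilters, given by majority vote on each wall. -/
def medUF (x y z : Set (Set X)) : Set (Set X) := x ∩ y ∪ x ∩ z ∪ y ∩ z

/-- The halfspace `h` (with `x` on the `h`-side) separates `x` from the set `A` of
ultrafilters. -/
def SepsFromSet (x : Set (Set X)) (A : Set (Set (Set X))) (h : Set X) : Prop :=
  h ∈ x ∧ ∀ a ∈ A, h ∉ a

/-- The gate map to `A`: `gateMap A x` is obtained from `x` by reversing exactly the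
walls separating `x` from `A`. -/
def gateMap (A : Set (Set (Set X))) (x : Set (Set X)) : Set (Set X) :=
  {h | (h ∈ x ∧ ¬ SepsFromSet x A h) ∨ (h ∉ x ∧ SepsFromSet x A hᶜ)}

/-- `A` is a gated subset of the dual space: it is nonempty and is the intersection of
the dual space with a collection of halfspaces. -/
def IsGated (H : Set (Set X)) (D : Set (Set (Set X))) (A : Set (Set (Set X))) : Prop :=
  A.Nonempty ∧ ∃ H' ⊆ H, A = {x ∈ dualSpace H D | H' ⊆ x}

/-- The halfspace `h`, regarded as a subset of the dual space. -/
def halfSet (H : Set (Set X)) (D : Set (Set (Set X))) (h : Set X) : Set (Set (Set X)) :=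
  {x ∈ dualSpace H D | h ∈ x}

/-! ### Walls of a quasitree coming from balls -/

variable (T : Type*) [MetricSpace T]

/-- `h` is (a halfspace of) one of the two walls of `T` determined by a connected
component `Ct` of the complement of the `K`-ball centred at `t`, namely the bipartitions
`(Ct, T ∖ Ct)` and `(Ct ∪ B, T ∖ (Ct ∪ B))`. -/
def wallFromBall (K : ℝ) (t : T) (h : Set T) : Prop :=
  ∃ Ct : Set T, (∃ p ∈ (closedBall t K)ᶜ, Ct = connectedComponentIn (closedBall t K)ᶜ p) ∧
    (h = Ct ∨ h = Ctᶜ ∨ h = Ct ∪ closedBall t K ∨ h = (Ct ∪ closedBall t K)ᶜ)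

/-- The walls of `T` determined by complementary components of `K`-balls. -/
def ballWalls (K : ℝ) : Set (Set T) := {h | ∃ t : T, wallFromBall T K t h}

/-- Disparate chains of ball-walls: chains of walls admitting defining `K`-balls whose
centres are pairwise at distance at least `10K`. -/
def disparateChains (K : ℝ) : Set (Set (Set T)) :=
  {c | IsChain' c ∧ ∃ β : Set T → T, (∀ h ∈ c, wallFromBall T K (β h) h) ∧
    ∀ h ∈ c, ∀ k ∈ c, h ≠ k → 10 * K ≤ dist (β h) (β k)}

/-! ### The image of a space in a product of dual quasitrees, and its walls -/

variable {m : ℕ}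

/-- The image `S` of `X` in the product `∏ T_{D_i}` of the dual quasitrees: tuples of
principal ultrafilters of the coordinates of points `f x`. -/
def SProd (T : Fin m → Type v) [∀ i, MetricSpace (T i)] (K : Fin m → ℝ)
    (f : X → ∀ i, T i) : Type _ :=
  {p : ∀ i, Set (Set (T i)) // ∃ x : X, p = fun i => pUF (ballWalls (T i) (K i)) (f x i)}

/-- The natural map `X → S`. -/
def sEmb (T : Fin m → Type v) [∀ i, MetricSpace (T i)] (K : Fin m → ℝ)
    (f : X → ∀ i, T i) (x : X) : SProd T K f :=
  ⟨fun i => pUF (ballWalls (T i) (K i)) (f x i), ⟨x, rfl⟩⟩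

/-- The `ℓ¹` metric on `S ⊆ ∏ T_{D_i}`. -/
noncomputable def dS (T : Fin m → Type v) [∀ i, MetricSpace (T i)] (K : Fin m → ℝ)
    (f : X → ∀ i, T i) (p q : SProd T K f) : ℝ :=
  ∑ i, dDr (disparateChains (T i) (K i)) (p.1 i) (q.1 i)

/-- The halfspace of `S` induced by the halfspace `h` of the `i`-th factor. -/
def indHalf (T : Fin m → Type v) [∀ i, MetricSpace (T i)] (K : Fin m → ℝ)
    (f : X → ∀ i, T i) (i : Fin m) (h : Set (T i)) : Set (SProd T K f) :=
  {s | h ∈ s.1 i}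

/-- The walls `W` on `S` induced by the ball-walls of the factors; two such walls cross
exactly when `S` meets all four quarterspaces. -/
def indWalls (T : Fin m → Type v) [∀ i, MetricSpace (T i)] (K : Fin m → ℝ)
    (f : X → ∀ i, T i) : Set (Set (SProd T K f)) :=
  {A | ∃ (i : Fin m) (h : Set (T i)), h ∈ ballWalls (T i) (K i) ∧
    (A = indHalf T K f i h ∨ A = (indHalf T K f i h)ᶜ)}

/-- The monochromatic collections of walls of `S` of colour `i`: images of disparate
chains of the `i`-th factor. -/
def indMono (T : Fin m → Type v) [∀ i, MetricSpace (T i)] (K : Fin m → ℝ)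
    (f : X → ∀ i, T i) (i : Fin m) : Set (Set (Set (SProd T K f))) :=
  {d | ∃ c ∈ disparateChains (T i) (K i), d = (indHalf T K f i) '' c}

/-- `D¹`: unions, over the factors, of (induced) disparate chains. -/
def bigD1 (T : Fin m → Type v) [∀ i, MetricSpace (T i)] (K : Fin m → ℝ)
    (f : X → ∀ i, T i) : Set (Set (Set (SProd T K f))) :=
  {d | ∃ e : ∀ _ : Fin m, Set (Set (SProd T K f)),
    (∀ i, e i ∈ indMono T K f i) ∧ d = ⋃ i, e i}

/-- `D`: the elements of `D¹` that are chains. -/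
def bigD (T : Fin m → Type v) [∀ i, MetricSpace (T i)] (K : Fin m → ℝ)
    (f : X → ∀ i, T i) : Set (Set (Set (SProd T K f))) :=
  {d ∈ bigD1 T K f | IsChain' d}

/-- `d` is an `L`-chain with respect to the system `D`: any member of `D` all of whose
elements cross two given elements of `d` has cardinality at most `L`. -/
def LChainIn {Z : Type*} (D : Set (Set (Set Z))) (L : ℕ) (d : Set (Set Z)) : Prop :=
  ∀ h ∈ d, ∀ k ∈ d, ∀ d' ∈ D, (∀ w ∈ d', Crosses w h ∧ Crosses w k) →
    d'.encard ≤ (L : ℕ∞)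

/-- `C`: the `L`-chains of `D`. -/
def bigC (T : Fin m → Type v) [∀ i, MetricSpace (T i)] (K : Fin m → ℝ)
    (f : X → ∀ i, T i) (L : ℕ) : Set (Set (Set (SProd T K f))) :=
  {d ∈ bigD T K f | LChainIn (bigD T K f) L d}

/-! ### Intervals, distant walls and gates in the dual space `S_C` -/

variable {Z : Type*}

/-- `H(x,y)`: the walls not separating `x` from `y`, oriented (i.e. represented by the
halfspace) so that both `x` and `y` choose them. -/
def Hxy (W : Set (Set Z)) (x y : Set (Set Z)) : Set (Set Z) := {h ∈ W | h ∈ x ∧ h ∈ y}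

/-- The interval `[x,y] = ∩_{h ∈ H(x,y)} h⁺` in the dual space. -/
def interval (W : Set (Set Z)) (D : Set (Set (Set Z))) (x y : Set (Set Z)) :
    Set (Set (Set Z)) :=
  {z ∈ dualSpace W D | Hxy W x y ⊆ z}

/-- `H^L(x,y)`: the distant walls, i.e. the walls of `H(x,y)` such that every
monochromatic chain of `Cc` separating `x` from `y` and crossing them has length at
most `L`. -/
def distantWalls (W : Set (Set Z)) (Cc : Set (Set (Set Z))) (Mono : Set (Set Z) → Prop)
    (L : ℕ) (x y : Set (Set Z)) : Set (Set Z) :=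
  {h ∈ Hxy W x y | ∀ c ∈ Cc, Mono c → Seps x y c → (∀ w ∈ c, Crosses w h) →
    c.encard ≤ (L : ℕ∞)}

/-- `I(x,y) = ∩_{h ∈ H^L(x,y)} h⁺`. -/
def Ixy (W : Set (Set Z)) (Cc : Set (Set (Set Z))) (Mono : Set (Set Z) → Prop)
    (L : ℕ) (x y : Set (Set Z)) : Set (Set (Set Z)) :=
  {z ∈ dualSpace W Cc | distantWalls W Cc Mono L x y ⊆ z}

/-- The halfspace `h⁻`, regarded as a subset of the dual space (the ultrafilters not
choosing `h`). -/
def negSide (W : Set (Set Z)) (D : Set (Set (Set Z))) (h : Set Z) : Set (Set (Set Z)) :=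
  {x ∈ dualSpace W D | h ∉ x}

/-- `H^L_t(x,y)`: the distant walls whose gate to `[x,y]` lies in the ball of radius `t`
about `x`. -/
def HLt (W : Set (Set Z)) (Cc : Set (Set (Set Z))) (Mono : Set (Set Z) → Prop)
    (L : ℕ) (x y : Set (Set Z)) (t : ℝ) : Set (Set Z) :=
  {h ∈ distantWalls W Cc Mono L x y |
    ∀ u ∈ gateMap (interval W Cc x y) '' negSide W Cc h, dDr Cc x u ≤ t}


section GateAux

variable {S : Type*} {H : Set (Set S)} {D : Set (Set (Set S))}

lemma encard_le_dD {x y c : Set (Set S)} (hc : c ∈ D) (hs : Seps x y c) :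
    c.encard ≤ dD D x y :=
  le_iSup₂ (f := fun c (_ : c ∈ D ∧ Seps x y c) => c.encard) c ⟨hc, hs⟩

lemma dD_le {x y : Set (Set S)} {M : ℕ∞}
    (hM : ∀ c ∈ D, Seps x y c → c.encard ≤ M) : dD D x y ≤ M :=
  iSup₂_le fun c hc => hM c hc.1 hc.2

lemma dD_comm (x y : Set (Set S)) : dD D x y = dD D y x := by
  have key : ∀ u v : Set (Set S), dD D u v ≤ dD D v u := fun u v =>
    dD_le fun c hc hs => encard_le_dD hc (fun k hk => by have := hs k hk; tauto)
  exact le_antisymm (key x y) (key y x)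

lemma dD_triangle (hsub : ∀ c ∈ D, ∀ c' ⊆ c, c' ∈ D) (x y z : Set (Set S)) :
    dD D x z ≤ dD D x y + dD D y z := by
  refine dD_le fun c hc hs => ?_
  have h1 : Seps x y {k ∈ c | (k ∈ x ↔ k ∉ y)} := fun k hk => hk.2
  have h2 : Seps y z {k ∈ c | ¬(k ∈ x ↔ k ∉ y)} := by
    intro k hk
    have := hs k hk.1
    have := hk.2
    tauto
  have e1 := encard_le_dD (hsub c hc _ (Set.sep_subset _ _)) h1
  have e2 := encard_le_dD (hsub c hc _ (Set.sep_subset _ _)) h2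
  have hcu : c ⊆ {k ∈ c | (k ∈ x ↔ k ∉ y)} ∪ {k ∈ c | ¬(k ∈ x ↔ k ∉ y)} := by
    intro k hk
    by_cases hP : (k ∈ x ↔ k ∉ y)
    · exact Or.inl ⟨hk, hP⟩
    · exact Or.inr ⟨hk, hP⟩
  calc c.encard ≤ _ := Set.encard_mono hcu
    _ ≤ _ := Set.encard_union_le _ _
    _ ≤ dD D x y + dD D y z := add_le_add e1 e2

lemma pUF_isUF (hW : WallClosed H) (s : S) : IsUF H (pUF H s) := by
  refine ⟨fun k hk => hk.1, fun k hk => ?_, fun k hk k' hk' hsub => ⟨hk', hsub hk.2⟩⟩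
  constructor
  · rintro ⟨-, hs⟩ ⟨-, hs'⟩
    exact hs' hs
  · intro hns
    exact ⟨hk, by_contra fun hsk => hns ⟨hW k hk, fun hskk => hsk hskk⟩⟩

lemma pUF_mem_dualSpace (hW : WallClosed H) (hD : IsDualisable H D) (s : S) :
    pUF H s ∈ dualSpace H D :=
  ⟨pUF_isUF hW s, fun t => hD.2.2.2 s t⟩

variable {A : Set (Set (Set S))} {x : Set (Set S)}

lemma gateMap_subset_H (hW : WallClosed H) (hx : x ⊆ H) :
    gateMap A x ⊆ H := by
  rintro k (⟨hk, -⟩ | ⟨-, hk, -⟩)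
  · exact hx hk
  · have := hW _ (hx hk)
    rwa [compl_compl] at this

lemma mem_gateMap_iff (hx : IsUF H x) (hAuf : ∀ a ∈ A, IsUF H a)
    {k : Set S} (hk : k ∈ H) :
    k ∈ gateMap A x ↔ (k ∈ x ∧ ∃ a ∈ A, k ∈ a) ∨ (k ∉ x ∧ ∀ a ∈ A, k ∈ a) := by
  have e1 : k ∈ x ↔ kᶜ ∉ x := hx.2.1 k hk
  have e2 : ∀ a ∈ A, (k ∈ a ↔ kᶜ ∉ a) := fun a ha => (hAuf a ha).2.1 k hk
  simp only [gateMap, SepsFromSet, Set.mem_setOf_eq]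
  constructor
  · rintro (⟨h1, h2⟩ | ⟨h1, h2, h3⟩)
    · refine Or.inl ⟨h1, ?_⟩
      by_contra hq
      push_neg at hq
      exact h2 ⟨h1, hq⟩
    · refine Or.inr ⟨h1, fun a ha => ?_⟩
      have := e2 a ha
      have := h3 a ha
      tauto
  · rintro (⟨h1, a, ha, hka⟩ | ⟨h1, h2⟩)
    · exact Or.inl ⟨h1, fun hs => hs.2 a ha hka⟩
    · refine Or.inr ⟨h1, ?_, fun a ha => ?_⟩
      · tauto
      · have := e2 a ha
        have := h2 a ha
        tauto

lemma gateMap_isUF (hW : WallClosed H) (hx : IsUF H x)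
    (hAuf : ∀ a ∈ A, IsUF H a) (hAne : A.Nonempty) : IsUF H (gateMap A x) := by
  refine ⟨gateMap_subset_H hW hx.1, fun k hk => ?_, fun k hkg k' hk' hsub => ?_⟩
  · rw [mem_gateMap_iff hx hAuf hk, mem_gateMap_iff hx hAuf (hW k hk)]
    have e1 : k ∈ x ↔ kᶜ ∉ x := hx.2.1 k hk
    have e2 : ∀ a ∈ A, (k ∈ a ↔ kᶜ ∉ a) := fun a ha => (hAuf a ha).2.1 k hk
    have e3 : (∃ a ∈ A, kᶜ ∈ a) ↔ ¬ ∀ a ∈ A, k ∈ a := by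
      constructor
      · rintro ⟨a, ha, hka⟩ hall
        exact (e2 a ha).1 (hall a ha) hka
      · intro hn
        push_neg at hn
        obtain ⟨a, ha, hka⟩ := hn
        refine ⟨a, ha, by_contra fun hc => hka ((e2 a ha).2 hc)⟩
    have e4 : (∀ a ∈ A, kᶜ ∈ a) ↔ ¬ ∃ a ∈ A, k ∈ a := by
      constructor
      · rintro hall ⟨a, ha, hka⟩
        exact (e2 a ha).1 hka (hall a ha)
      · intro hn a ha
        exact by_contra fun hc => hn ⟨a, ha, (e2 a ha).2 hc⟩
    have e5 : kᶜ ∈ x ↔ ¬ k ∈ x := by tauto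
    rw [e3, e4, e5]
    by_cases hp : k ∈ x <;>
      by_cases hq : ∃ a ∈ A, k ∈ a <;>
        by_cases hr : ∀ a ∈ A, k ∈ a <;> simp [hp, hq, hr]
  · have hkH : k ∈ H := gateMap_subset_H hW hx.1 hkg
    rw [mem_gateMap_iff hx hAuf hkH] at hkg
    rw [mem_gateMap_iff hx hAuf hk']
    obtain ⟨a₀, ha₀⟩ := hAne
    rcases hkg with ⟨h1, a, ha, hka⟩ | ⟨h1, h2⟩
    · exact Or.inl ⟨hx.2.2 k h1 k' hk' hsub, a, ha, (hAuf a ha).2.2 k hka k' hk' hsub⟩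
    · by_cases hk'x : k' ∈ x
      · exact Or.inl ⟨hk'x, a₀, ha₀, (hAuf a₀ ha₀).2.2 k (h2 a₀ ha₀) k' hk' hsub⟩
      · exact Or.inr ⟨hk'x, fun a ha => (hAuf a ha).2.2 k (h2 a ha) k' hk' hsub⟩

lemma gateMap_mem_dualSpace (hW : WallClosed H) (hD : IsDualisable H D)
    (hx : x ∈ dualSpace H D) (hAd : ∀ a ∈ A, a ∈ dualSpace H D) (hAne : A.Nonempty) :
    gateMap A x ∈ dualSpace H D := by
  obtain ⟨a₀, ha₀⟩ := hAne
  have hAuf : ∀ a ∈ A, IsUF H a := fun a ha => (hAd a ha).1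
  refine ⟨gateMap_isUF hW hx.1 hAuf ⟨a₀, ha₀⟩, fun s => ?_⟩
  have key : dD D (gateMap A x) (pUF H s) ≤ dD D x (pUF H s) + dD D x a₀ := by
    refine dD_le fun c hc hs => ?_
    have hcH := hD.1 c hc
    have h1 : Seps x (pUF H s) {k ∈ c | (k ∈ x ↔ k ∈ gateMap A x)} := by
      intro k hk
      have := hs k hk.1
      have := hk.2
      tauto
    have h2 : Seps x a₀ {k ∈ c | ¬(k ∈ x ↔ k ∈ gateMap A x)} := by
      intro k hk
      have hkH : k ∈ H := hcH hk.1
      have hiff := mem_gateMap_iff (A := A) hx.1 hAuf hkH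
      by_cases hkx : k ∈ x
      · have hkg : k ∉ gateMap A x := fun hg => hk.2 (iff_of_true hkx hg)
        rw [hiff] at hkg
        push_neg at hkg
        exact iff_of_true hkx (hkg.1 hkx a₀ ha₀)
      · have hkg : k ∈ gateMap A x := by
          by_contra hg
          exact hk.2 (iff_of_false hkx hg)
        rw [hiff] at hkg
        have hka : k ∈ a₀ := by
          rcases hkg with ⟨h1', -⟩ | ⟨-, h2'⟩
          · exact absurd h1' hkx
          · exact h2' a₀ ha₀
        exact iff_of_false hkx (not_not_intro hka)
    have e1 := encard_le_dD (hD.2.2.1 c hc _ (Set.sep_subset _ _)) h1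
    have e2 := encard_le_dD (hD.2.2.1 c hc _ (Set.sep_subset _ _)) h2
    have hcu : c ⊆ {k ∈ c | (k ∈ x ↔ k ∈ gateMap A x)} ∪
        {k ∈ c | ¬(k ∈ x ↔ k ∈ gateMap A x)} := by
      intro k hk
      by_cases hP : (k ∈ x ↔ k ∈ gateMap A x)
      · exact Or.inl ⟨hk, hP⟩
      · exact Or.inr ⟨hk, hP⟩
    calc c.encard ≤ _ := Set.encard_mono hcu
      _ ≤ _ := Set.encard_union_le _ _
      _ ≤ dD D x (pUF H s) + dD D x a₀ := add_le_add e1 e2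
  refine lt_of_le_of_lt key ?_
  have hxp : dD D x (pUF H s) < ⊤ := hx.2 s
  have hxa : dD D x a₀ < ⊤ := by
    refine lt_of_le_of_lt (dD_triangle hD.2.2.1 x (pUF H s) a₀) ?_
    have h2 : dD D (pUF H s) a₀ < ⊤ := by
      rw [dD_comm]
      exact (hAd a₀ ha₀).2 s
    exact ENat.add_lt_top.2 ⟨hxp, h2⟩
  exact ENat.add_lt_top.2 ⟨hxp, hxa⟩

end GateAux

/-- Lemma 2.10.  Let `D` be a dualisable system on a set with walls
`(S,H)` and let `A ⊆ S_D` be a gated subset.  Then for any halfspace `h` of any wall in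
`H` (regarded, via `halfSet`, as a subset of the dual space `S_D`), the image of that
halfspace under the gate map of `A` is itself a gated subset of `S_D`. -/
theorem gate_of_halfspace_is_gated {S : Type*}
    (H : Set (Set S)) (D : Set (Set (Set S)))
    (hW : WallClosed H) (hD : IsDualisable H D)
    (A : Set (Set (Set S))) (hA : IsGated H D A)
    (h : Set S) (hh : h ∈ H) (hne : (halfSet H D h).Nonempty) :
    IsGated H D (gateMap A '' halfSet H D h) := by
  obtain ⟨hAne, H', hH'H, hAeq⟩ := hA
  have hAd : ∀ a ∈ A, a ∈ dualSpace H D := fun a ha => by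
    rw [hAeq] at ha; exact ha.1
  have hAuf : ∀ a ∈ A, IsUF H a := fun a ha => (hAd a ha).1
  have hH'A : ∀ a ∈ A, H' ⊆ a := fun a ha => by rw [hAeq] at ha; exact ha.2
  have hhd : ∀ z ∈ halfSet H D h, z ∈ dualSpace H D := fun z hz => hz.1
  have hhuf : ∀ z ∈ halfSet H D h, IsUF H z := fun z hz => hz.1.1
  obtain ⟨x₀, hx₀⟩ := id hne
  refine ⟨hne.image _,
    {k ∈ H | ∀ a ∈ A, k ∈ a} ∪ {k ∈ H | h ⊆ k ∧ ∃ a ∈ A, k ∈ a}, ?_, ?_⟩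
  · rintro k (⟨hk, -⟩ | ⟨hk, -⟩)
    exacts [hk, hk]
  · ext y
    simp only [Set.mem_image, Set.mem_setOf_eq]
    constructor
    · rintro ⟨x, hx, rfl⟩
      have hxd : x ∈ dualSpace H D := hx.1
      refine ⟨gateMap_mem_dualSpace hW hD hxd hAd hAne, ?_⟩
      rintro k (⟨hkH, hP⟩ | ⟨hkH, hhk, a, ha, hka⟩)
      · rw [mem_gateMap_iff hxd.1 hAuf hkH]
        obtain ⟨a₀, ha₀⟩ := hAne
        by_cases hkx : k ∈ x
        · exact Or.inl ⟨hkx, a₀, ha₀, hP a₀ ha₀⟩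
        · exact Or.inr ⟨hkx, hP⟩
      · rw [mem_gateMap_iff hxd.1 hAuf hkH]
        exact Or.inl ⟨hxd.1.2.2 h hx.2 k hkH hhk, a, ha, hka⟩
    · rintro ⟨hyd, hy⟩
      have hyA : y ∈ A := by
        rw [hAeq]
        exact ⟨hyd, fun k hk => hy (Or.inl ⟨hH'H hk, fun a ha => hH'A a ha hk⟩)⟩
      have hxd : gateMap (halfSet H D h) y ∈ dualSpace H D :=
        gateMap_mem_dualSpace hW hD hyd hhd hne
      have hxh : h ∈ gateMap (halfSet H D h) y := by
        rw [mem_gateMap_iff hyd.1 hhuf hh]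
        by_cases hhy : h ∈ y
        · exact Or.inl ⟨hhy, x₀, hx₀, hx₀.2⟩
        · exact Or.inr ⟨hhy, fun z hz => hz.2⟩
      refine ⟨gateMap (halfSet H D h) y, ⟨hxd, hxh⟩, ?_⟩
      have hsub2 : y ⊆ gateMap A (gateMap (halfSet H D h) y) := by
        intro k hky
        have hkH : k ∈ H := hyd.1.1 hky
        rw [mem_gateMap_iff hxd.1 hAuf hkH]
        by_cases hkx : k ∈ gateMap (halfSet H D h) y
        · exact Or.inl ⟨hkx, y, hyA, hky⟩
        · refine Or.inr ⟨hkx, fun a ha => ?_⟩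
          have hsep : ∀ z ∈ halfSet H D h, k ∉ z := by
            have hkx' := hkx
            rw [mem_gateMap_iff hyd.1 hhuf hkH] at hkx'
            push_neg at hkx'
            exact hkx'.1 hky
          have hhkc : h ⊆ kᶜ := by
            intro s hs hsk
            exact hsep _ ⟨pUF_mem_dualSpace hW hD s, hh, hs⟩ ⟨hkH, hsk⟩
          by_contra hka
          have hkca : kᶜ ∈ a := by
            have := (hAuf a ha).2.1 k hkH
            tauto
          have hkcy : kᶜ ∈ y := hy (Or.inr ⟨hW k hkH, hhkc, a, ha, hkca⟩)
          exact ((hyd.1.2.1 k hkH).1 hky) hkcy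
      have hguf : IsUF H (gateMap A (gateMap (halfSet H D h) y)) :=
        gateMap_isUF hW hxd.1 hAuf hAne
      refine Set.Subset.antisymm ?_ hsub2
      intro k hkg
      by_contra hky
      have hkH : k ∈ H := hguf.1 hkg
      have h1 : kᶜ ∈ y := by
        have := hyd.1.2.1 k hkH
        tauto
      exact ((hguf.2.1 k hkH).1 hkg) (hsub2 h1)

end GSC
end

section
/- In the dual space S_C, given x,y ∈ S_C, if h ∈ H^L(x,y) is a distant wall, then the gate of the halfspace h⁻ to the gated set [x,y] satisfies diam(g_{[x,y]}(h⁻)) ≤ mL. -/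
/-!
Common definitions: coarse geometry (hyperbolicity, rough geodesics, stable cylinders,
quasi-isometries, quasitrees, coarse medians), word metrics, spaces with walls,
dualisable systems and their dual spaces, walls of quasitrees coming from balls,
and the induced wall structures on images of spaces in products of quasitrees.
-/

open Set Metric

namespace GSC

universe u v w

variable {X Y : Type*}

/-! ### Walls of a quasitree coming from balls -/

variable (T : Type*) [MetricSpace T]

/-! ### The image of a space in a product of dual quasitrees, and its walls -/

variable {m : ℕ}

/-! ### Intervals, distant walls and gates in the dual space `S_C` -/

variable {Z : Type*}

/-! ### Auxiliary lemmas for Statement 16 -/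

section AuxGate

variable {Z : Type*} {W : Set (Set Z)} {D : Set (Set (Set Z))}

lemma aux_mem_gateMap {A : Set (Set (Set Z))} {x : Set (Set Z)} {w : Set Z} :
    w ∈ gateMap A x ↔
      ((w ∈ x ∧ ¬ SepsFromSet x A w) ∨ (w ∉ x ∧ SepsFromSet x A wᶜ)) := Iff.rfl

lemma aux_uf_compl_mem {a : Set (Set Z)} (ha : IsUF W a) {w : Set Z} (hw : w ∈ W)
    (h : w ∉ a) : wᶜ ∈ a := by
  by_contra hc
  exact h ((ha.2.1 w hw).2 hc)

lemma aux_uf_compl_not_mem {a : Set (Set Z)} (ha : IsUF W a) {w : Set Z} (hw : w ∈ W)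
    (h : w ∈ a) : wᶜ ∉ a := (ha.2.1 w hw).1 h

lemma aux_mem_interval_self {x y : Set (Set Z)} (hx : x ∈ dualSpace W D) :
    x ∈ interval W D x y := ⟨hx, fun h hh => hh.2.1⟩

lemma aux_gate_two_sided {A : Set (Set (Set Z))} {u₀ : Set (Set Z)} (hu₀ : IsUF W u₀) {w : Set Z}
    (hw : w ∈ W) : (w ∈ gateMap A u₀ ↔ wᶜ ∉ gateMap A u₀) := by
  rw [aux_mem_gateMap, aux_mem_gateMap]
  simp only [compl_compl]
  by_cases h0 : w ∈ u₀
  · have h0c : wᶜ ∉ u₀ := aux_uf_compl_not_mem hu₀ hw h0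
    tauto
  · have h0c : wᶜ ∈ u₀ := aux_uf_compl_mem hu₀ hw h0
    tauto

lemma aux_gate_upward {A : Set (Set (Set Z))} (hAne : A.Nonempty)
    (hAuf : ∀ a ∈ A, IsUF W a) {u₀ : Set (Set Z)} (hu₀ : IsUF W u₀)
    {w k : Set Z} (hwW : w ∈ W) (hkW : k ∈ W) (hsub : w ⊆ k)
    (hwu : w ∈ gateMap A u₀) : k ∈ gateMap A u₀ := by
  obtain ⟨a0, ha0⟩ := hAne
  rw [aux_mem_gateMap] at hwu ⊢
  rcases hwu with ⟨hw0, hns⟩ | ⟨hw0, hcs⟩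
  · have hk0 : k ∈ u₀ := hu₀.2.2 w hw0 k hkW hsub
    have hex : ∃ a ∈ A, w ∈ a := by
      by_contra hcon
      push_neg at hcon
      exact hns ⟨hw0, hcon⟩
    obtain ⟨a, haA, hwa⟩ := hex
    have hka : k ∈ a := (hAuf a haA).2.2 w hwa k hkW hsub
    exact Or.inl ⟨hk0, fun hs => hs.2 a haA hka⟩
  · have hall : ∀ a ∈ A, k ∈ a := by
      intro a haA
      have hwa : w ∈ a := by
        by_contra hwna
        exact hcs.2 a haA (aux_uf_compl_mem (hAuf a haA) hwW hwna)
      exact (hAuf a haA).2.2 w hwa k hkW hsub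
    by_cases hk0 : k ∈ u₀
    · exact Or.inl ⟨hk0, fun hs => hs.2 a0 ha0 (hall a0 ha0)⟩
    · refine Or.inr ⟨hk0, aux_uf_compl_mem hu₀ hkW hk0, ?_⟩
      intro a haA
      exact aux_uf_compl_not_mem (hAuf a haA) hkW (hall a haA)

lemma aux_gate_Hxy {x y u₀ : Set (Set Z)} (hx : x ∈ dualSpace W D)
    (hu₀ : IsUF W u₀) :
    Hxy W x y ⊆ gateMap (interval W D x y) u₀ := by
  intro h hh
  obtain ⟨hhW, hhx, hhy⟩ := hh
  rw [aux_mem_gateMap]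
  by_cases h0 : h ∈ u₀
  · exact Or.inl ⟨h0, fun hs => hs.2 x (aux_mem_interval_self hx) hhx⟩
  · refine Or.inr ⟨h0, aux_uf_compl_mem hu₀ hhW h0, ?_⟩
    intro a haA
    exact aux_uf_compl_not_mem (haA.1.1) hhW (haA.2 ⟨hhW, hhx, hhy⟩)

lemma aux_seps_xy (hWc : WallClosed W) {x y u v : Set (Set Z)}
    (hx : IsUF W x) (hy : IsUF W y)
    (hus : Hxy W x y ⊆ u) (hvs : Hxy W x y ⊆ v)
    (hu2 : ∀ w ∈ W, (w ∈ u ↔ wᶜ ∉ u)) (hv2 : ∀ w ∈ W, (w ∈ v ↔ wᶜ ∉ v))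
    {c : Set (Set Z)} (hcW : c ⊆ W) (hsep : Seps u v c) : Seps x y c := by
  intro w hwc
  have hwW := hcW hwc
  have hsw := hsep w hwc
  by_cases hwx : w ∈ x
  · by_cases hwy : w ∈ y
    · exfalso
      have hmem : w ∈ Hxy W x y := ⟨hwW, hwx, hwy⟩
      exact (hsw.1 (hus hmem)) (hvs hmem)
    · tauto
  · by_cases hwy : w ∈ y
    · tauto
    · exfalso
      have hcx : wᶜ ∈ x := aux_uf_compl_mem hx hwW hwx
      have hcy : wᶜ ∈ y := aux_uf_compl_mem hy hwW hwy
      have hmem : wᶜ ∈ Hxy W x y := ⟨hWc w hwW, hcx, hcy⟩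
      have hwu : w ∉ u := fun hc => (hu2 w hwW).1 hc (hus hmem)
      have hwv : w ∉ v := fun hc => (hv2 w hwW).1 hc (hvs hmem)
      tauto

lemma aux_crosses {A : Set (Set (Set Z))} (hAne : A.Nonempty)
    (hAuf : ∀ a ∈ A, IsUF W a) {u₀ v₀ : Set (Set Z)}
    (hu₀ : IsUF W u₀) (hv₀ : IsUF W v₀)
    {h w : Set Z} (hhW : h ∈ W) (hwW : w ∈ W) (hWc : WallClosed W)
    (hhu : h ∈ gateMap A u₀) (hhv : h ∈ gateMap A v₀)
    (hh0u : h ∉ u₀) (hh0v : h ∉ v₀)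
    (hwu : w ∈ gateMap A u₀) (hwv : w ∉ gateMap A v₀) :
    Crosses w h := by
  have hhcW : hᶜ ∈ W := hWc h hhW
  have hwcW : wᶜ ∈ W := hWc w hwW
  have hhc0u : hᶜ ∈ u₀ := aux_uf_compl_mem hu₀ hhW hh0u
  have hhc0v : hᶜ ∈ v₀ := aux_uf_compl_mem hv₀ hhW hh0v
  refine ⟨?_, ?_, ?_, ?_⟩
  · -- (w ∩ h).Nonempty; otherwise w ⊆ hᶜ
    rw [Set.nonempty_iff_ne_empty]
    intro hempty
    have hsub : w ⊆ hᶜ := fun p hp hph =>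
      (Set.eq_empty_iff_forall_notMem.mp hempty p) ⟨hp, hph⟩
    have hmem : hᶜ ∈ gateMap A u₀ := aux_gate_upward hAne hAuf hu₀ hwW hhcW hsub hwu
    exact (aux_gate_two_sided hu₀ hhW).1 hhu hmem
  · -- (w ∩ hᶜ).Nonempty; otherwise w ⊆ h
    rw [Set.nonempty_iff_ne_empty]
    intro hempty
    have hsub : w ⊆ h := fun p hp => by
      by_contra hph
      exact (Set.eq_empty_iff_forall_notMem.mp hempty p) ⟨hp, hph⟩
    have hsubc : hᶜ ⊆ wᶜ := Set.compl_subset_compl.mpr hsub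
    have hwc0u : wᶜ ∈ u₀ := hu₀.2.2 hᶜ hhc0u wᶜ hwcW hsubc
    have hw0u : w ∉ u₀ := fun hc => aux_uf_compl_not_mem hu₀ hwW hc hwc0u
    have hwc0v : wᶜ ∈ v₀ := hv₀.2.2 hᶜ hhc0v wᶜ hwcW hsubc
    have hw0v : w ∉ v₀ := fun hc => aux_uf_compl_not_mem hv₀ hwW hc hwc0v
    rw [aux_mem_gateMap] at hwu
    rcases hwu with ⟨hc, -⟩ | ⟨-, hcs⟩
    · exact hw0u hc
    have hns : ¬ SepsFromSet v₀ A wᶜ := fun hs =>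
      hwv (aux_mem_gateMap.mpr (Or.inr ⟨hw0v, hs⟩))
    exact hns ⟨hwc0v, hcs.2⟩
  · -- (wᶜ ∩ h).Nonempty; otherwise h ⊆ w
    rw [Set.nonempty_iff_ne_empty]
    intro hempty
    have hsub : h ⊆ w := fun p hp => by
      by_contra hpw
      exact (Set.eq_empty_iff_forall_notMem.mp hempty p) ⟨hpw, hp⟩
    exact hwv (aux_gate_upward hAne hAuf hv₀ hhW hwW hsub hhv)
  · -- (wᶜ ∩ hᶜ).Nonempty; otherwise hᶜ ⊆ w
    rw [Set.nonempty_iff_ne_empty]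
    intro hempty
    have hsub : hᶜ ⊆ w := fun p hp => by
      by_contra hpw
      exact (Set.eq_empty_iff_forall_notMem.mp hempty p) ⟨hpw, hp⟩
    have hw0u : w ∈ u₀ := hu₀.2.2 hᶜ hhc0u w hwW hsub
    have hw0v : w ∈ v₀ := hv₀.2.2 hᶜ hhc0v w hwW hsub
    rw [aux_mem_gateMap] at hwu
    rcases hwu with ⟨-, hns⟩ | ⟨hcon, -⟩
    swap
    · exact hcon hw0u
    have hex : ∃ a ∈ A, w ∈ a := by
      by_contra hcon
      push_neg at hcon
      exact hns ⟨hw0u, hcon⟩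
    obtain ⟨a, haA, hwa⟩ := hex
    have hs : SepsFromSet v₀ A w := by
      by_contra hns2
      exact hwv (aux_mem_gateMap.mpr (Or.inl ⟨hw0v, hns2⟩))
    exact hs.2 a haA hwa

lemma aux_isChain_subset {c c' : Set (Set Z)} (hsub : c' ⊆ c) (hc : IsChain' c) :
    IsChain' c' := by
  obtain ⟨σ, h1, h2⟩ := hc
  exact ⟨σ, fun h hh => h1 h (hsub hh), fun h hh k hk => h2 h (hsub hh) k (hsub hk)⟩

lemma aux_encard_iUnion_le {α : Type*} {m : ℕ} (e : Fin m → Set α) :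
    (⋃ i, e i).encard ≤ ∑ i, (e i).encard := by
  induction m with
  | zero => simp
  | succ n ih =>
    have heq : (⋃ i : Fin (n + 1), e i) = e 0 ∪ ⋃ i : Fin n, e i.succ := by
      ext p
      simp [Set.mem_iUnion, Fin.exists_fin_succ]
    rw [heq, Fin.sum_univ_succ]
    exact le_trans (Set.encard_union_le _ _)
      (add_le_add le_rfl (ih fun i => e i.succ))

end AuxGate

section AuxWalls

variable {X : Type*} {m : ℕ} (T : Fin m → Type v) [∀ i, MetricSpace (T i)]
  (K : Fin m → ℝ) (f : X → ∀ i, T i)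

lemma aux_wallClosed : WallClosed (indWalls T K f) := by
  rintro A ⟨i, h, hb, hA | hA⟩
  · exact ⟨i, h, hb, Or.inr (by rw [hA])⟩
  · exact ⟨i, h, hb, Or.inl (by rw [hA, compl_compl])⟩

lemma aux_empty_indMono (j : Fin m) (ht : Nonempty (T j)) :
    (∅ : Set (Set (SProd T K f))) ∈ indMono T K f j := by
  refine ⟨∅, ⟨⟨id, ?_, ?_⟩, ⟨fun _ => ht.some, ?_, ?_⟩⟩, by simp⟩ <;> simp

lemma aux_indMono_subset_walls (i : Fin m) {d : Set (Set (SProd T K f))}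
    (hd : d ∈ indMono T K f i) : d ⊆ indWalls T K f := by
  obtain ⟨ch, ⟨-, β, hβ, -⟩, rfl⟩ := hd
  rintro A ⟨h', hh', rfl⟩
  exact ⟨i, h', ⟨β h', hβ h' hh'⟩, Or.inl rfl⟩

end AuxWalls


/-- Lemma 5.5.  In the dual space `S_C`, given `x,y ∈ S_C`, if
`h ∈ H^L(x,y)` is a distant wall, then the gate of the halfspace `h⁻` to the gated set
`[x,y]` satisfies `diam (g_{[x,y]}(h⁻)) ≤ m·L`. -/
theorem gate_of_distant_wall_small
    {G : Type w} [Group G] {X : Type u}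
    (ρ : G →* Equiv.Perm X) (dX : X → X → ℝ) (μX : X → X → X → X)
    (δ lam cc : ℝ) {m : ℕ} (T : Fin m → Type u) [∀ i, MetricSpace (T i)]
    (K : Fin m → ℝ) (μT : ∀ i, T i → T i → T i → T i)
    (f : X → ∀ i, T i) (α : G →* Equiv.Perm (∀ i, T i))
    (hδ : 0 ≤ δ)
    (hhypX : IsHyp dX δ) (hrgX : RGSpace dX δ) (hmedX : IsCoarseMedian dX μX δ)
    (hisoX : ∀ (g : G) (x y : X), dX (ρ g x) (ρ g y) = dX x y)
    (hqt : ∀ i, IsQuasitree (fun a b : T i => dist a b) lam)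
    (hhypT : ∀ i, IsHyp (fun a b : T i => dist a b) δ)
    (hK : ∀ i, 100 * δ < K i)
    (hdisc : ∀ (i : Fin m) (t : T i), ¬ IsPreconnected (closedBall t (K i))ᶜ)
    (hmedT : ∀ i, IsCoarseMedian (fun a b : T i => dist a b) (μT i) cc)
    (hqie : IsQIE dX (l1distF fun i (a b : T i) => dist a b) f lam)
    (hqm : ∀ x y z : X,
      l1distF (fun i (a b : T i) => dist a b)
        (fun i => μT i (f x i) (f y i) (f z i)) (f (μX x y z)) ≤ cc)
    (hisoA : ∀ (g : G) (p q : ∀ i, T i),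
      l1distF (fun i (a b : T i) => dist a b) (α g p) (α g q)
        = l1distF (fun i (a b : T i) => dist a b) p q)
    (hequiv : ∀ (g : G) (x : X), f (ρ g x) = α g (f x))
    (L : ℕ)
    (hgrid : ∀ (i j : Fin m) (d₁ d₂ : Set (Set (SProd T K f))),
      d₁ ∈ indMono T K f i → d₂ ∈ indMono T K f j →
      (∀ w₁ ∈ d₁, ∀ w₂ ∈ d₂, Crosses w₁ w₂) →
      min d₁.encard d₂.encard ≤ (L : ℕ∞))
    :
    ∀ x y : Set (Set (SProd T K f)),
      x ∈ dualSpace (indWalls T K f) (bigC T K f L) →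
      y ∈ dualSpace (indWalls T K f) (bigC T K f L) →
      ∀ h ∈ distantWalls (indWalls T K f) (bigC T K f L)
          (fun c => ∃ i, c ∈ indMono T K f i) L x y,
        ∀ u ∈ gateMap (interval (indWalls T K f) (bigC T K f L) x y) ''
            negSide (indWalls T K f) (bigC T K f L) h,
          ∀ v ∈ gateMap (interval (indWalls T K f) (bigC T K f L) x y) ''
              negSide (indWalls T K f) (bigC T K f L) h,
            dD (bigC T K f L) u v ≤ ((m * L : ℕ) : ℕ∞) := by
  intro x y hx hy h hh u hu v hv
  obtain ⟨u₀, hu₀n, rfl⟩ := hu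
  obtain ⟨v₀, hv₀n, rfl⟩ := hv
  have hTne : ∀ j, Nonempty (T j) := fun j => by
    obtain ⟨-, V, Γ, htree, f', -, hsurj⟩ := hqt j
    obtain ⟨t, -⟩ := hsurj htree.isConnected.nonempty.some
    exact ⟨t⟩
  set W := indWalls T K f with hWdef
  set Cc := bigC T K f L with hCdef
  set A := interval W Cc x y with hAdef
  have hWc : WallClosed W := aux_wallClosed T K f
  have hxu : IsUF W x := hx.1
  have hyu : IsUF W y := hy.1
  obtain ⟨hu₀d, hh0u⟩ := hu₀n
  obtain ⟨hv₀d, hh0v⟩ := hv₀n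
  have hu₀ : IsUF W u₀ := hu₀d.1
  have hv₀ : IsUF W v₀ := hv₀d.1
  have hAne : A.Nonempty := ⟨x, aux_mem_interval_self hx⟩
  have hAuf : ∀ a ∈ A, IsUF W a := fun a ha => ha.1.1
  have hHu : Hxy W x y ⊆ gateMap A u₀ := aux_gate_Hxy hx hu₀
  have hHv : Hxy W x y ⊆ gateMap A v₀ := aux_gate_Hxy hx hv₀
  have hhH : h ∈ Hxy W x y := hh.1
  rw [dD]
  refine iSup_le fun c => iSup_le fun hc => ?_
  obtain ⟨hcC, hsep⟩ := hc
  obtain ⟨⟨⟨e, he, rfl⟩, hchain⟩, hLch⟩ := hcC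
  have hcW : (⋃ i, e i) ⊆ W :=
    Set.iUnion_subset fun i => aux_indMono_subset_walls T K f i (he i)
  have g2u : ∀ w ∈ W, (w ∈ gateMap A u₀ ↔ wᶜ ∉ gateMap A u₀) :=
    fun w hw => aux_gate_two_sided hu₀ hw
  have g2v : ∀ w ∈ W, (w ∈ gateMap A v₀ ↔ wᶜ ∉ gateMap A v₀) :=
    fun w hw => aux_gate_two_sided hv₀ hw
  have hsxy : Seps x y (⋃ i, e i) :=
    aux_seps_xy hWc hxu hyu hHu hHv g2u g2v hcW hsep
  have hcross : ∀ w ∈ (⋃ i, e i), Crosses w h := by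
    intro w hwc
    have hwW := hcW hwc
    have hsw := hsep w hwc
    by_cases hwu : w ∈ gateMap A u₀
    · exact aux_crosses hAne hAuf hu₀ hv₀ hhH.1 hwW hWc (hHu hhH) (hHv hhH)
        hh0u hh0v hwu (hsw.1 hwu)
    · have hwv : w ∈ gateMap A v₀ := by
        by_contra h2
        exact hwu (hsw.2 h2)
      exact aux_crosses hAne hAuf hv₀ hu₀ hhH.1 hwW hWc (hHv hhH) (hHu hhH)
        hh0v hh0u hwv hwu
  have hei : ∀ i, (e i).encard ≤ (L : ℕ∞) := by
    intro i
    have hsubi : e i ⊆ ⋃ j, e j := Set.subset_iUnion e i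
    have heiC : e i ∈ bigC T K f L := by
      refine ⟨⟨⟨fun j => if j = i then e i else ∅, fun j => ?_, ?_⟩,
        aux_isChain_subset hsubi hchain⟩,
        fun h' hh' k hk d' hd' hcr => hLch h' (hsubi hh') k (hsubi hk) d' hd' hcr⟩
      · by_cases hji : j = i
        · subst hji
          simpa using he j
        · simpa [hji] using aux_empty_indMono T K f j (hTne j)
      · apply Set.Subset.antisymm
        · have := Set.subset_iUnion (fun j => if j = i then e i else ∅) i
          simpa using this
        · refine Set.iUnion_subset fun j => ?_
          by_cases hji : j = i
          · subst hji
            simp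
          · simp [hji]
    exact hh.2 (e i) heiC ⟨i, he i⟩ (fun w hw => hsxy w (hsubi hw))
      (fun w hw => hcross w (hsubi hw))
  calc (⋃ i, e i).encard ≤ ∑ i, (e i).encard := aux_encard_iUnion_le e
    _ ≤ ∑ _i : Fin m, (L : ℕ∞) := Finset.sum_le_sum fun i _ => hei i
    _ = ((m * L : ℕ) : ℕ∞) := by
        simp [Finset.sum_const, Finset.card_univ, Nat.cast_mul, nsmul_eq_mul]


end GSC
end
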